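/- arXiv:2110.01413 — 3 statements merged into one kernel-verified Lean document; each statement's English description precedes it below -/
import Mathlib

section
/- Under the identification of the previous statement, the composite of the inverse isomorphism ker(f_C) ≅ ker((g₂,-f_B))/im((g₁,f_A)) with the map induced by projection B₁ ⊕ A₂ → A₂ → coker(f_A) equals the snake-lemma connecting homomorphism δ : ker(f_C) → coker(f_A). -/
theorem stmt_5_general {A₁ B₁ C₁ A₂ B₂ C₂ : Type} [AddCommGroup A₁] [AddCommGroup B₁]
    [AddCommGroup C₁] [AddCommGroup A₂] [AddCommGroup B₂] [AddCommGroup C₂]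
    (π₁ : B₁ →+ C₁) (g₂ : A₂ →+ B₂)
    (fA : A₁ →+ A₂) (fB : B₁ →+ B₂) (fC : C₁ →+ C₂)
    (α : A₁ →+ B₁ × A₂) (β : B₁ × A₂ →+ B₂)
    (hβ : ∀ x : B₁ × A₂, β x = g₂ x.2 - fB x.1)
    -- `θ` is the isomorphism induced by `(b, a) ↦ π₁ b`
    (θ : (↥β.ker ⧸ α.range.addSubgroupOf β.ker) ≃+ ↥fC.ker)
    (hθ : ∀ x : ↥β.ker, ((θ (QuotientAddGroup.mk x) : C₁)) = π₁ (x : B₁ × A₂).1)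
    -- `φ` is the homomorphism induced by `(b, a) ↦ [a] ∈ coker f_A`
    (φ : (↥β.ker ⧸ α.range.addSubgroupOf β.ker) →+ A₂ ⧸ fA.range)
    (hφ : ∀ x : ↥β.ker,
      φ (QuotientAddGroup.mk x) = QuotientAddGroup.mk ((x : B₁ × A₂).2))
    -- `δ` is the snake-lemma connecting homomorphism
    (δ : ↥fC.ker →+ A₂ ⧸ fA.range)
    (hδ : ∀ (c : ↥fC.ker) (b : B₁) (a : A₂),
      π₁ b = (c : C₁) → g₂ a = fB b → δ c = QuotientAddGroup.mk a) :
    ∀ c : ↥fC.ker, φ (θ.symm c) = δ c := by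
  intro c
  obtain ⟨x, hx⟩ := QuotientAddGroup.mk_surjective (θ.symm c)
  have hlift : π₁ (x : B₁ × A₂).1 = c := by rw [← hθ x, hx, θ.apply_symm_apply]
  have hpull : g₂ (x : B₁ × A₂).2 = fB (x : B₁ × A₂).1 :=
    sub_eq_zero.mp ((hβ x).symm.trans (AddMonoidHom.mem_ker.mp x.2))
  rw [← hx, hφ x, hδ c _ _ hlift hpull]

/-- In the snake-lemma setup for abelian groups, let
`θ : ker((g₂,-f_B))/im((g₁,f_A)) ≃ ker f_C` be the isomorphism induced by
`(b, a) ↦ π₁ b`, let `φ` be the homomorphism on the same quotient induced by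
`(b, a) ↦ [a] ∈ coker f_A`, and let `δ : ker f_C → coker f_A` be the snake-lemma
connecting homomorphism (characterized by its usual formula).  Then
`φ ∘ θ⁻¹ = δ`. -/
theorem stmt_5 {A₁ B₁ C₁ A₂ B₂ C₂ : Type} [AddCommGroup A₁] [AddCommGroup B₁]
    [AddCommGroup C₁] [AddCommGroup A₂] [AddCommGroup B₂] [AddCommGroup C₂]
    (g₁ : A₁ →+ B₁) (π₁ : B₁ →+ C₁) (g₂ : A₂ →+ B₂) (π₂ : B₂ →+ C₂)
    (fA : A₁ →+ A₂) (fB : B₁ →+ B₂) (fC : C₁ →+ C₂)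
    (hg₁ : Function.Injective g₁) (hπ₁ : Function.Surjective π₁) (hex₁ : g₁.range = π₁.ker)
    (hg₂ : Function.Injective g₂) (hπ₂ : Function.Surjective π₂) (hex₂ : g₂.range = π₂.ker)
    (hsq₁ : fB.comp g₁ = g₂.comp fA) (hsq₂ : fC.comp π₁ = π₂.comp fB)
    (α : A₁ →+ B₁ × A₂) (β : B₁ × A₂ →+ B₂)
    (hα : ∀ a, α a = (g₁ a, fA a)) (hβ : ∀ x : B₁ × A₂, β x = g₂ x.2 - fB x.1)
    -- `θ` is the isomorphism induced by `(b, a) ↦ π₁ b`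
    (θ : (↥β.ker ⧸ α.range.addSubgroupOf β.ker) ≃+ ↥fC.ker)
    (hθ : ∀ x : ↥β.ker, ((θ (QuotientAddGroup.mk x) : C₁)) = π₁ (x : B₁ × A₂).1)
    -- `φ` is the homomorphism induced by `(b, a) ↦ [a] ∈ coker f_A`
    (φ : (↥β.ker ⧸ α.range.addSubgroupOf β.ker) →+ A₂ ⧸ fA.range)
    (hφ : ∀ x : ↥β.ker,
      φ (QuotientAddGroup.mk x) = QuotientAddGroup.mk ((x : B₁ × A₂).2))
    -- `δ` is the snake-lemma connecting homomorphism
    (δ : ↥fC.ker →+ A₂ ⧸ fA.range)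
    (hδ : ∀ (c : ↥fC.ker) (b : B₁) (a : A₂),
      π₁ b = (c : C₁) → g₂ a = fB b → δ c = QuotientAddGroup.mk a) :
    ∀ c : ↥fC.ker, φ (θ.symm c) = δ c :=
  stmt_5_general π₁ g₂ fA fB fC α β hβ θ hθ φ hφ δ hδ
end

section
/- Every virtually cyclic group is either finite, or finite-by-(infinite cyclic), or finite-by-(infinite dihedral): i.e., if G contains a cyclic subgroup of finite index, then G is finite, or there is an exact sequence 1 → H → G → ℤ → 1 with H finite, or an exact sequence 1 → H → G → D_∞ → 1 with H finite. -/
/-- The infinite dihedral group `D_∞ = ℤ/2 * ℤ/2`. -/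
abbrev DInf : Type := Monoid.Coprod (Multiplicative (ZMod 2)) (Multiplicative (ZMod 2))

/-!
The normal core of the cyclic subgroup is an infinite cyclic normal subgroup `⟨g⟩` of finite
index, and each `x` conjugates `g` to `g` or to `g⁻¹`.

If `g` is central, the transfer `G → ⟨g⟩ ≅ ℤ` is `x ↦ x ^ [G : ⟨g⟩]` on `⟨g⟩`, so its kernel
meets `⟨g⟩` trivially and is therefore finite, while its image is infinite cyclic.

Otherwise the centralizer `C` of `g` has index two, and the same construction gives a surjection
`ψ : C → ℤ` with finite kernel `T`. Some `t ∉ C` inverts `g`, so `x ↦ ψ (t x t⁻¹)` and `ψ⁻¹`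
agree on `⟨g⟩`; as `ℤ` is torsion-free, they agree on all of `C`. Hence `T` is normal in `G`, and
`G/T` is generated by the involution `tT` and an element `cT` of infinite order (with `ψ c = 1`)
which `tT` inverts: `G/T ≅ D_∞`.
-/

open Subgroup

section

variable {G : Type*} [Group G]

theorem Subgroup.finite_of_disjoint_of_finiteIndex {K H : Subgroup G} [H.FiniteIndex]
    (hKH : Disjoint K H) : Finite K := by
  refine Finite.of_injective (fun x : K ↦ ((x : G) : G ⧸ H)) fun x y hxy ↦ ?_
  rw [QuotientGroup.eq] at hxy
  exact Subtype.ext (inv_mul_eq_one.1 (disjoint_def.1 hKH (mul_mem (inv_mem x.2) y.2) hxy))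

theorem MonoidHom.eq_of_eqOn_of_finiteIndex {A : Type*} [CommGroup A] [IsMulTorsionFree A]
    {f₁ f₂ : G →* A} {H : Subgroup G} [H.FiniteIndex] (h : Set.EqOn f₁ f₂ H) : f₁ = f₂ := by
  ext x
  have hx : x ^ H.normalCore.index ∈ H := H.normalCore_le (H.normalCore.pow_index_mem x)
  exact pow_left_injective FiniteIndex.index_ne_zero (by simpa only [map_pow] using h hx)

theorem MonoidHom.finite_ker_transfer_of_le_center {H : Subgroup G} [H.FiniteIndex]
    (hH : H ≤ center G) {A : Type*} [CommGroup A] [IsMulTorsionFree A] {e : H →* A}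
    (he : Function.Injective e) : Finite (transfer e).ker := by
  refine finite_of_disjoint_of_finiteIndex (H := H) (disjoint_def.2 fun {x} hx hxH ↦ ?_)
  have key : ∀ (k : ℕ) (g₀ : G), g₀⁻¹ * x ^ k * g₀ ∈ H → g₀⁻¹ * x ^ k * g₀ = x ^ k :=
    fun k g₀ _ ↦ by
      rw [mul_assoc, ← mem_center_iff.1 (pow_mem (hH hxH) k) g₀, inv_mul_cancel_left]
  have hpow : e ⟨x, hxH⟩ ^ H.index = 1 := by
    rw [← map_pow]
    exact (transfer_eq_pow e x key).symm.trans hx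
  have hex : e ⟨x, hxH⟩ = 1 := (pow_eq_one_iff_left FiniteIndex.index_ne_zero).1 hpow
  simpa using he (hex.trans (map_one e).symm)

theorem MonoidHom.exists_surjective_int_of_finite_ker [Infinite G] (ψ : G →* Multiplicative ℤ)
    [Finite ψ.ker] : ∃ φ : G →* Multiplicative ℤ, Function.Surjective φ ∧ φ.ker = ψ.ker := by
  have : Infinite ψ.range := by
    refine not_finite_iff_infinite.1 fun _ ↦ ?_
    have : Finite (G ⧸ ψ.ker) := .of_equiv _ (QuotientGroup.quotientKerEquivRange ψ).symm.toEquiv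
    have : Finite G := .of_subgroup_quotient ψ.ker
    exact not_finite G
  let e : ψ.range ≃* Multiplicative ℤ := intCyclicMulEquiv.symm
  refine ⟨(e : ψ.range →* Multiplicative ℤ).comp ψ.rangeRestrict,
    e.surjective.comp ψ.rangeRestrict_surjective, ?_⟩
  rw [ker_mulEquiv_comp, ker_rangeRestrict]

theorem exists_surjective_int_of_le_center {H : Subgroup G} [H.FiniteIndex] [IsCyclic H]
    [Infinite H] (hH : H ≤ center G) :
    ∃ φ : G →* Multiplicative ℤ, Function.Surjective φ ∧ Finite φ.ker := by
  have : Infinite G := Infinite.of_injective _ H.subtype_injective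
  let e : H ≃* Multiplicative ℤ := intCyclicMulEquiv.symm
  let ψ := MonoidHom.transfer (e : H →* Multiplicative ℤ)
  have : Finite ψ.ker := MonoidHom.finite_ker_transfer_of_le_center hH e.injective
  obtain ⟨φ, hφ, hker⟩ := ψ.exists_surjective_int_of_finite_ker
  exact ⟨φ, hφ, hker ▸ this⟩

theorem exists_monoidHom_zmod_two_of_mul_self_eq_one {Q : Type*} [Group Q] {s : Q}
    (hs : s * s = 1) : ∃ f : Multiplicative (ZMod 2) →* Q, f (.ofAdd 1) = s := by
  have h2 : zmultiplesHom (Additive Q) (.ofMul s) 2 = 0 := by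
    simp [two_zsmul, ← ofMul_mul, hs]
  refine ⟨(ZMod.lift 2 ⟨_, h2⟩).toMultiplicativeLeft, ?_⟩
  simpa using congrArg Additive.toMul (ZMod.lift_coe 2 ⟨_, h2⟩ 1)

namespace DInf

def a : DInf := Monoid.Coprod.inl (.ofAdd 1)

def b : DInf := Monoid.Coprod.inr (.ofAdd 1)

theorem a_mul_a : a * a = 1 := by
  rw [a, ← map_mul, show (.ofAdd 1 * .ofAdd 1 : Multiplicative (ZMod 2)) = 1 by decide, map_one]

theorem b_mul_b : b * b = 1 := by
  rw [b, ← map_mul, show (.ofAdd 1 * .ofAdd 1 : Multiplicative (ZMod 2)) = 1 by decide, map_one]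

theorem zpow_mul_a (k : ℤ) : (a * b) ^ k * a = a * (a * b) ^ (-k) := by
  have ha : a⁻¹ = a := inv_eq_of_mul_eq_one_left a_mul_a
  have hconj : a * (a * b) * a⁻¹ = (a * b)⁻¹ := by
    rw [ha, mul_inv_rev, ha, inv_eq_of_mul_eq_one_left b_mul_b, ← mul_assoc, a_mul_a, one_mul]
  have h : a * (a * b) ^ (-k) * a⁻¹ = (a * b) ^ k := by
    rw [← conj_zpow, hconj, inv_zpow', neg_neg]
  rw [← h, inv_mul_cancel_right]

theorem exists_eq_zpow_or_eq_mul_zpow (w : DInf) :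
    ∃ k : ℤ, w = (a * b) ^ k ∨ w = a * (a * b) ^ k := by
  have hzmod2 : ∀ x : Multiplicative (ZMod 2), x = 1 ∨ x = .ofAdd 1 := by decide
  induction w using Monoid.Coprod.induction_on with
  | inl m =>
    rcases hzmod2 m with rfl | rfl
    · exact ⟨0, .inl (by rw [map_one, zpow_zero])⟩
    · exact ⟨0, .inr (by rw [zpow_zero, mul_one, a])⟩
  | inr m =>
    rcases hzmod2 m with rfl | rfl
    · exact ⟨0, .inl (by rw [map_one, zpow_zero])⟩
    · exact ⟨1, .inr (by rw [zpow_one, ← mul_assoc, a_mul_a, one_mul, b])⟩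
  | mul x y hx hy =>
    obtain ⟨k, rfl | rfl⟩ := hx <;> obtain ⟨j, rfl | rfl⟩ := hy
    · exact ⟨k + j, .inl (zpow_add _ _ _).symm⟩
    · exact ⟨-k + j, .inr (by rw [← mul_assoc, zpow_mul_a, mul_assoc, zpow_add])⟩
    · exact ⟨k + j, .inr (by rw [mul_assoc, zpow_add])⟩
    · refine ⟨-k + j, .inl ?_⟩
      calc a * (a * b) ^ k * (a * (a * b) ^ j) = a * ((a * b) ^ k * a) * (a * b) ^ j := by
            simp only [mul_assoc]
        _ = (a * b) ^ (-k + j) := by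
            rw [zpow_mul_a, ← mul_assoc, a_mul_a, one_mul, zpow_add]

theorem nonempty_mulEquiv_of_generators {Q : Type*} [Group Q] {s r : Q} (hs : s * s = 1)
    (hsr : s * r * s⁻¹ = r⁻¹) (hr : ¬IsOfFinOrder r) (hs_notMem : s ∉ zpowers r)
    (hgen : ∀ q, q ∈ zpowers r ∨ s * q ∈ zpowers r) : Nonempty (DInf ≃* Q) := by
  have hsr_mul_self : s * r * (s * r) = 1 := by
    rw [← mul_assoc]
    nth_rw 2 [← inv_eq_of_mul_eq_one_left hs]
    rw [hsr, inv_mul_cancel]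
  obtain ⟨fa, hfa₁⟩ := exists_monoidHom_zmod_two_of_mul_self_eq_one hs
  obtain ⟨fb, hfb₁⟩ := exists_monoidHom_zmod_two_of_mul_self_eq_one hsr_mul_self
  let f : DInf →* Q := Monoid.Coprod.lift fa fb
  have hfa : f a = s := hfa₁
  have hfb : f b = s * r := hfb₁
  have hfab (k : ℤ) : f ((a * b) ^ k) = r ^ k := by
    rw [map_zpow, map_mul, hfa, hfb, ← mul_assoc, hs, one_mul]
  have hfaab (k : ℤ) : f (a * (a * b) ^ k) = s * r ^ k := by rw [map_mul, hfa, hfab]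
  refine ⟨.ofBijective f ⟨(injective_iff_map_eq_one f).2 fun w hw ↦ ?_, fun q ↦ ?_⟩⟩
  · obtain ⟨k, rfl | rfl⟩ := exists_eq_zpow_or_eq_mul_zpow w
    · rw [hfab, ← zpow_zero r] at hw
      rw [injective_zpow_iff_not_isOfFinOrder.2 hr hw, zpow_zero]
    · rw [hfaab] at hw
      exact absurd (mem_zpowers_iff.2 ⟨-k, by rw [zpow_neg, eq_inv_of_mul_eq_one_left hw]⟩)
        hs_notMem
  · rcases hgen q with hq | hq <;> obtain ⟨k, hk⟩ := mem_zpowers_iff.1 hq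
    · exact ⟨(a * b) ^ k, (hfab k).trans hk⟩
    · exact ⟨a * (a * b) ^ k, by rw [hfaab, hk, ← mul_assoc, hs, one_mul]⟩

end DInf

theorem mk_coe_eq_mk_coe_iff {A : Type*} [Group A] {C : Subgroup G} (ψ : C →* A) (x y : C) :
    ((x : G) : G ⧸ ψ.ker.map C.subtype) = (y : G) ↔ ψ x = ψ y := by
  rw [QuotientGroup.eq, ← coe_inv, ← coe_mul, ← C.subtype_apply,
    mem_map_iff_mem C.subtype_injective, MonoidHom.mem_ker, map_mul, map_inv, inv_mul_eq_one]

section IndexTwo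

variable {C : Subgroup G} [C.Normal]

theorem map_conjNormal_of_mem {A : Type*} [CommGroup A] (ψ : C →* A) {h : G} (hh : h ∈ C)
    (x : C) : ψ (MulAut.conjNormal h x) = ψ x := by
  have : MulAut.conjNormal h x = ⟨h, hh⟩ * x * (⟨h, hh⟩ : C)⁻¹ :=
    Subtype.ext (MulAut.conjNormal_apply h x)
  rw [this, map_mul, map_mul, map_inv, mul_inv_cancel_comm]

variable {t : G} {ψ : C →* Multiplicative ℤ}

theorem normal_map_ker_of_index_two (hC : C.index = 2) (ht : t ∉ C)
    (hinv : ∀ x : C, ψ (MulAut.conjNormal t x) = (ψ x)⁻¹) : (ψ.ker.map C.subtype).Normal := by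
  have hker (h : G) (x : C) (hx : ψ x = 1) : ψ (MulAut.conjNormal h x) = 1 := by
    by_cases hh : h ∈ C
    · rwa [map_conjNormal_of_mem ψ hh]
    have hth : t⁻¹ * h ∈ C := (mul_mem_iff_of_index_two hC).2 (iff_of_false (by simpa) hh)
    rw [← mul_inv_cancel_left t h, map_mul, MulAut.mul_apply, hinv,
      map_conjNormal_of_mem ψ hth, hx, inv_one]
  refine ⟨fun _ hn h ↦ ?_⟩
  obtain ⟨x, hx, rfl⟩ := mem_map.1 hn
  exact mem_map.2 ⟨_, hker h x hx, MulAut.conjNormal_apply h x⟩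

theorem mul_self_mem_map_ker_of_index_two (hC : C.index = 2)
    (hinv : ∀ x : C, ψ (MulAut.conjNormal t x) = (ψ x)⁻¹) : t * t ∈ ψ.ker.map C.subtype := by
  have htt : t * t ∈ C := mul_self_mem_of_index_two hC t
  refine mem_map.2 ⟨⟨t * t, htt⟩, ?_, rfl⟩
  rw [MonoidHom.mem_ker, ← self_eq_inv, ← hinv]
  congr 1
  exact Subtype.ext (by simp [MulAut.conjNormal_apply, mul_assoc])

theorem exists_surjective_dInf_of_index_two (hC : C.index = 2) (ht : t ∉ C)
    (hψ : Function.Surjective ψ) [Finite ψ.ker]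
    (hinv : ∀ x : C, ψ (MulAut.conjNormal t x) = (ψ x)⁻¹) :
    ∃ φ : G →* DInf, Function.Surjective φ ∧ Finite φ.ker := by
  set T := ψ.ker.map C.subtype
  have := normal_map_ker_of_index_two hC ht hinv
  have hmk := mk_coe_eq_mk_coe_iff ψ
  obtain ⟨c, hc⟩ := hψ (.ofAdd 1)
  have hψzpow (k : ℤ) : ψ (c ^ k) = .ofAdd k := by
    rw [map_zpow, hc, ← ofAdd_zsmul, smul_eq_mul, mul_one]
  have hzpow (x : C) : ((x : G) : G ⧸ T) = ((c : G) : G ⧸ T) ^ (ψ x).toAdd := by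
    rw [← QuotientGroup.mk_zpow, ← coe_zpow, hmk, hψzpow, ofAdd_toAdd]
  have hs : ((t : G) : G ⧸ T) * t = 1 := by
    rw [← QuotientGroup.mk_mul, QuotientGroup.eq_one_iff]
    exact mul_self_mem_map_ker_of_index_two hC hinv
  have hsr : ((t : G) : G ⧸ T) * c * (t : G ⧸ T)⁻¹ = ((c : G) : G ⧸ T)⁻¹ := by
    rw [← QuotientGroup.mk_mul, ← QuotientGroup.mk_inv, ← QuotientGroup.mk_mul,
      ← QuotientGroup.mk_inv, ← MulAut.conjNormal_apply, ← coe_inv, hmk, hinv, map_inv]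
  have hr : ¬IsOfFinOrder ((c : G) : G ⧸ T) := by
    refine injective_zpow_iff_not_isOfFinOrder.1 fun k j hkj ↦ ?_
    simp only [← QuotientGroup.mk_zpow, ← coe_zpow, hmk, hψzpow] at hkj
    exact Multiplicative.ofAdd.injective hkj
  have hs_notMem : ((t : G) : G ⧸ T) ∉ zpowers ((c : G) : G ⧸ T) := by
    intro h
    obtain ⟨k, hk⟩ := mem_zpowers_iff.1 h
    rw [← QuotientGroup.mk_zpow, QuotientGroup.eq] at hk
    exact ht ((mul_mem_cancel_left (inv_mem (zpow_mem c.2 k))).1 (map_subtype_le _ hk))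
  have hgen (q : G ⧸ T) :
      q ∈ zpowers ((c : G) : G ⧸ T) ∨ (t : G ⧸ T) * q ∈ zpowers (c : G ⧸ T) := by
    obtain ⟨x, rfl⟩ := QuotientGroup.mk_surjective q
    by_cases hx : x ∈ C
    · exact .inl ⟨_, (hzpow ⟨x, hx⟩).symm⟩
    · have htx : t * x ∈ C := (mul_mem_iff_of_index_two hC).2 (iff_of_false ht hx)
      exact .inr ⟨_, (hzpow ⟨t * x, htx⟩).symm⟩
  obtain ⟨e⟩ := DInf.nonempty_mulEquiv_of_generators hs hsr hr hs_notMem hgen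
  refine ⟨(e.symm : G ⧸ T →* DInf).comp (QuotientGroup.mk' T),
    e.symm.surjective.comp (QuotientGroup.mk'_surjective T), ?_⟩
  rw [MonoidHom.ker_mulEquiv_comp, QuotientGroup.ker_mk']
  exact .of_equiv _ (equivMapOfInjective ψ.ker C.subtype C.subtype_injective).toEquiv

end IndexTwo

theorem conj_eq_or_conj_eq_inv {g : G} (hg : ¬IsOfFinOrder g) [hN : (zpowers g).Normal] (x : G) :
    x * g * x⁻¹ = g ∨ x * g * x⁻¹ = g⁻¹ := by
  obtain ⟨k, hk⟩ := mem_zpowers_iff.1 (hN.conj_mem g (mem_zpowers g) x)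
  obtain ⟨j, hj⟩ := mem_zpowers_iff.1 (hN.conj_mem g (mem_zpowers g) x⁻¹)
  have hjk : j * k = 1 := by
    refine injective_zpow_iff_not_isOfFinOrder.2 hg (?_ : g ^ (j * k) = g ^ (1 : ℤ))
    rw [zpow_mul, hj, conj_zpow, hk, zpow_one]
    group
  rcases Int.eq_one_or_neg_one_of_mul_eq_one ((mul_comm k j).trans hjk) with rfl | rfl
  · exact .inl (by rw [← hk, zpow_one])
  · exact .inr (by rw [← hk, zpow_neg_one])

theorem mem_centralizer_zpowers_iff {g x : G} :
    x ∈ centralizer (zpowers g : Set G) ↔ x * g * x⁻¹ = g := by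
  rw [zpowers_eq_closure, centralizer_closure, mem_centralizer_singleton_iff,
    mul_inv_eq_iff_eq_mul]

theorem notMem_centralizer_zpowers {g t : G} (hg : ¬IsOfFinOrder g) (ht : t * g * t⁻¹ = g⁻¹) :
    t ∉ centralizer (zpowers g : Set G) := by
  rw [mem_centralizer_zpowers_iff, ht]
  exact fun h ↦
    hg (isOfFinOrder_iff_pow_eq_one.2 ⟨2, two_pos, by rw [sq, ← inv_eq_iff_mul_eq_one, h]⟩)

theorem index_centralizer_zpowers_eq_two {g t : G} (hg : ¬IsOfFinOrder g) [(zpowers g).Normal]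
    (ht : t * g * t⁻¹ = g⁻¹) : (centralizer (zpowers g : Set G)).index = 2 := by
  refine index_eq_two_iff_exists_notMem_and'.2 ⟨t, notMem_centralizer_zpowers hg ht, fun b ↦ ?_⟩
  simp only [mem_centralizer_zpowers_iff]
  refine (conj_eq_or_conj_eq_inv hg b).symm.imp (fun hb ↦ ?_) id
  calc t * b * g * (t * b)⁻¹ = t * (b * g * b⁻¹) * t⁻¹ := by group
    _ = (t * g * t⁻¹)⁻¹ := by rw [hb]; group
    _ = g := by rw [ht, inv_inv]

theorem exists_surjective_dInf_of_notMem_center {g : G} (hg : ¬IsOfFinOrder g)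
    [(zpowers g).Normal] [(zpowers g).FiniteIndex] (hgc : g ∉ center G) :
    ∃ φ : G →* DInf, Function.Surjective φ ∧ Finite φ.ker := by
  obtain ⟨t, ht⟩ : ∃ t, t * g * t⁻¹ = g⁻¹ := by
    obtain ⟨t, ht⟩ := not_forall.1 (mt mem_center_iff.2 hgc)
    exact ⟨t, (conj_eq_or_conj_eq_inv hg t).resolve_left (by rwa [mul_inv_eq_iff_eq_mul])⟩
  set C := centralizer (zpowers g : Set G)
  have hgC : zpowers g ≤ C := zpowers_le.2 (mem_centralizer_zpowers_iff.2 (by group))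
  let H : Subgroup C := (zpowers g).subgroupOf C
  have hH : H ≤ center C := fun y hy ↦
    mem_center_iff.2 fun x ↦ Subtype.ext (mem_centralizer_iff.1 x.2 y hy).symm
  have : Infinite (zpowers g) := (infinite_zpowers.2 hg).to_subtype
  have : Infinite H := (subgroupOfEquivOfLe hgC).toEquiv.infinite_iff.2 this
  have : IsCyclic H := isCyclic_of_injective (subgroupOfEquivOfLe hgC : H →* zpowers g)
    (subgroupOfEquivOfLe hgC).injective
  obtain ⟨ψ, hψ, hker⟩ := exists_surjective_int_of_le_center hH
  have hinv : ψ.comp (MulAut.conjNormal t : C ≃* C) = ψ⁻¹ := by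
    refine MonoidHom.eq_of_eqOn_of_finiteIndex (H := H) fun y hy ↦ ?_
    obtain ⟨k, hk⟩ := mem_zpowers_iff.1 (mem_subgroupOf.1 hy)
    have : MulAut.conjNormal t y = y⁻¹ := Subtype.ext (by
      rw [MulAut.conjNormal_apply, coe_inv, ← hk, ← conj_zpow, ht, inv_zpow])
    simp [this]
  exact exists_surjective_dInf_of_index_two (index_centralizer_zpowers_eq_two hg ht)
    (notMem_centralizer_zpowers hg ht) hψ (DFunLike.congr_fun hinv)

end

/-- Every virtually cyclic group (a group with a cyclic subgroup of finite index) is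
either finite, or finite-by-(infinite cyclic) (there is an exact sequence
`1 → H → G → ℤ → 1` with `H` finite), or finite-by-(infinite dihedral) (there is an
exact sequence `1 → H → G → D_∞ → 1` with `H` finite). -/
theorem stmt_6 (G : Type) [Group G]
    (hvc : ∃ H : Subgroup G, IsCyclic H ∧ H.FiniteIndex) :
    Finite G ∨
    (∃ φ : G →* Multiplicative ℤ, Function.Surjective φ ∧ Finite φ.ker) ∨
    (∃ φ : G →* DInf, Function.Surjective φ ∧ Finite φ.ker) := by
  rcases finite_or_infinite G with hG | hG
  · exact .inl hG
  obtain ⟨H, hH, hHfin⟩ := hvc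
  obtain ⟨g, hgN⟩ := H.normalCore.isCyclic_iff_exists_zpowers_eq_top.1
    (isCyclic_of_le H.normalCore_le)
  have : (zpowers g).Normal := hgN ▸ H.normalCore_normal
  have : (zpowers g).FiniteIndex := hgN ▸ inferInstance
  have hg : ¬IsOfFinOrder g := fun h ↦ by
    have : Finite (zpowers g) := h.finite_zpowers.to_subtype
    have : Finite G := .of_subgroup_quotient (zpowers g)
    exact not_finite G
  by_cases hgc : g ∈ center G
  · have : Infinite (zpowers g) := (infinite_zpowers.2 hg).to_subtype
    exact .inr (.inl (exists_surjective_int_of_le_center (zpowers_le.2 hgc)))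
  · exact .inr (.inr (exists_surjective_dInf_of_notMem_center hg hgc))
end

section
/- A group G fits into an exact sequence 1 → H → G → D_∞ → 1 with H finite (i.e. is virtually cyclic of type VC2) if and only if G is isomorphic to an amalgamated free product K₁ *_H K₂ where K₁, K₂ are finite groups each containing H as an index-2 subgroup. -/
open Monoid Function

theorem Subgroup.IsComplement.eq_one_of_mem_of_mem {G : Type*} [Group G] {S T : Set G}
    (hST : IsComplement S T) (h1S : 1 ∈ S) (h1T : 1 ∈ T) {g : G} (hgS : g ∈ S) (hgT : g ∈ T) :
    g = 1 :=
  congrArg Subtype.val ((hST.equiv_fst_eq_self_of_mem_of_one_mem h1T hgS).symm.trans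
    (hST.equiv_fst_eq_one_of_mem_of_one_mem h1S hgT))

namespace ZMod2

theorem ofAdd_one_mul_self : (.ofAdd 1 : Multiplicative (ZMod 2)) * .ofAdd 1 = 1 := by decide

theorem eq_one_or_eq_ofAdd_one (z : Multiplicative (ZMod 2)) : z = 1 ∨ z = .ofAdd 1 := by
  revert z; decide

def lift {M : Type*} [Monoid M] (e : M) (he : e * e = 1) : Multiplicative (ZMod 2) →* M where
  toFun z := if z = 1 then 1 else e
  map_one' := if_pos rfl
  map_mul' x y := by
    rcases eq_one_or_eq_ofAdd_one x with rfl | rfl <;>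
      rcases eq_one_or_eq_ofAdd_one y with rfl | rfl <;>
      simp [he, ofAdd_one_mul_self]

theorem lift_ofAdd_one {M : Type*} [Monoid M] (e : M) (he : e * e = 1) :
    lift e he (.ofAdd 1) = e := by
  simp [lift]

open scoped Classical in
noncomputable def quotientOfIndexTwo {K : Type*} [Group K] (N : Subgroup K) (hN : N.index = 2) :
    K →* Multiplicative (ZMod 2) where
  toFun k := if k ∈ N then 1 else .ofAdd 1
  map_one' := if_pos N.one_mem
  map_mul' x y := by
    simp only [Subgroup.mul_mem_iff_of_index_two hN]
    by_cases hx : x ∈ N <;> by_cases hy : y ∈ N <;> simp [hx, hy, ofAdd_one_mul_self]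

theorem quotientOfIndexTwo_of_mem {K : Type*} [Group K] {N : Subgroup K} (hN : N.index = 2)
    {k : K} (hk : k ∈ N) : quotientOfIndexTwo N hN k = 1 := by
  simp [quotientOfIndexTwo, hk]

theorem quotientOfIndexTwo_of_notMem {K : Type*} [Group K] {N : Subgroup K} (hN : N.index = 2)
    {k : K} (hk : k ∉ N) : quotientOfIndexTwo N hN k = .ofAdd 1 := by
  simp [quotientOfIndexTwo, hk]

end ZMod2

namespace DInf

def incl : (i : Bool) → Multiplicative (ZMod 2) →* DInf
  | false => Coprod.inl
  | true => Coprod.inr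

def gen (i : Bool) : DInf := incl i (.ofAdd 1)

theorem incl_injective (i : Bool) : Injective (incl i) := by
  cases i
  exacts [Coprod.inl_injective, Coprod.inr_injective]

theorem mem_range_incl {i : Bool} {x : DInf} : x ∈ (incl i).range ↔ x = 1 ∨ x = gen i := by
  constructor
  · rintro ⟨z, rfl⟩
    rcases ZMod2.eq_one_or_eq_ofAdd_one z with rfl | rfl
    exacts [.inl (map_one _), .inr rfl]
  · rintro (rfl | rfl)
    exacts [one_mem _, ⟨_, rfl⟩]

theorem range_incl_sup_range_incl : (incl false).range ⊔ (incl true).range = ⊤ :=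
  Coprod.range_inl_sup_range_inr

theorem nat_card_range_incl (i : Bool) : Nat.card (incl i).range = 2 := by
  rw [← Nat.card_congr (MonoidHom.ofInjective (incl_injective i)).toEquiv]
  simp

def reflection (i : Bool) : Equiv.Perm ℤ := Equiv.subLeft (bif i then -1 else 1)

theorem reflection_mul_self (i : Bool) : reflection i * reflection i = 1 := by
  ext n
  simp [reflection]

/-- The generators act on `ℤ` as the reflections in `1/2` and `-1/2`. -/
def toPermInt : DInf →* Equiv.Perm ℤ :=
  Coprod.lift (ZMod2.lift _ (reflection_mul_self false)) (ZMod2.lift _ (reflection_mul_self true))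

theorem toPermInt_gen (i : Bool) : toPermInt (gen i) = reflection i := by
  cases i <;> simp [toPermInt, gen, incl, ZMod2.lift_ofAdd_one]

/-- An alternating word starting with `gen false` moves `0` to the right, one starting with
`gen true` moves it to the left. -/
theorem toPermInt_prod_alternating_zero_pos (i : Bool) (l : List Bool)
    (hl : (i :: l).IsChain (· ≠ ·)) :
    0 < (bif i then -1 else 1) * toPermInt ((i :: l).map gen).prod 0 := by
  induction l generalizing i with
  | nil => cases i <;> simp [toPermInt_gen, reflection]
  | cons j l ih =>
    obtain ⟨hij, hl⟩ := List.isChain_cons_cons.1 hl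
    have := ih j hl
    cases i <;> cases j <;> simp_all [toPermInt_gen, reflection] <;> omega

theorem prod_alternating_ne_one {l : List Bool} (hl : l.IsChain (· ≠ ·)) (hne : l ≠ []) :
    (l.map gen).prod ≠ 1 := by
  obtain ⟨i, l, rfl⟩ := List.exists_cons_of_ne_nil hne
  intro h
  have := toPermInt_prod_alternating_zero_pos i l hl
  rw [h] at this
  simp at this

end DInf

namespace Monoid.PushoutI

section Reduced

variable {ι H : Type*} [Group H] {K : ι → Type*} [∀ i, Group (K i)] {φ : ∀ i, H →* K i}

theorem NormalWord.reduced {d : NormalWord.Transversal φ} (w : NormalWord d) :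
    Reduced φ w.toWord := by
  rintro ⟨i, g⟩ hg hrange
  exact w.ne_one _ hg ((d.compl i).eq_one_of_mem_of_mem (one_mem _) (d.one_mem i) hrange
    (w.normalized i g hg))

theorem exists_reduced_eq_base_mul (hφ : ∀ i, Injective (φ i)) (x : PushoutI φ) :
    ∃ (h : H) (w : CoprodI.Word K), Reduced φ w ∧ x = base φ h * ofCoprodI w.prod := by
  classical
  obtain ⟨d⟩ := NormalWord.transversal_nonempty φ hφ
  let w : NormalWord d := NormalWord.equiv x
  exact ⟨w.head, w.toWord, w.reduced, (NormalWord.equiv.symm_apply_apply x).symm⟩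

end Reduced

variable {H : Type*} [Group H] {K : Bool → Type*} [∀ i, Group (K i)] {φ : ∀ i, H →* K i}
  {χ : PushoutI φ →* DInf}

theorem map_ofCoprodI_prod_of_reduced
    (hχ : ∀ i k, k ∉ (φ i).range → χ (of i k) = DInf.gen i) {w : CoprodI.Word K}
    (hw : Reduced φ w) :
    χ (ofCoprodI w.prod) = ((w.toList.map Sigma.fst).map DInf.gen).prod := by
  rw [CoprodI.Word.prod, map_list_prod, map_list_prod, List.map_map, List.map_map, List.map_map]
  congr 1
  refine List.map_congr_left fun g hg => ?_
  simp [hχ _ _ (hw g hg)]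

theorem ker_le_range_base (hφ : ∀ i, Injective (φ i)) (hbase : ∀ h, χ (base φ h) = 1)
    (hχ : ∀ i k, k ∉ (φ i).range → χ (of i k) = DInf.gen i) : χ.ker ≤ (base φ).range := by
  intro x hx
  obtain ⟨h, w, hw, rfl⟩ := exists_reduced_eq_base_mul hφ x
  have hnil : w.toList.map Sigma.fst = [] := by
    by_contra hne
    refine DInf.prod_alternating_ne_one ((List.isChain_map _).2 w.chain_ne) hne ?_
    rwa [MonoidHom.mem_ker, map_mul, hbase, one_mul, map_ofCoprodI_prod_of_reduced hχ hw] at hx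
  have hw1 : w = .empty := by
    ext1
    simpa using hnil
  exact ⟨h, by simp [hw1]⟩

noncomputable def toDInf (hidx : ∀ i, (φ i).range.index = 2) : PushoutI φ →* DInf :=
  lift (fun i => (DInf.incl i).comp (ZMod2.quotientOfIndexTwo _ (hidx i))) 1 fun i => by
    ext h
    simp [ZMod2.quotientOfIndexTwo_of_mem (hidx i) ⟨h, rfl⟩]

variable (hidx : ∀ i, (φ i).range.index = 2)

theorem toDInf_base (h : H) : toDInf hidx (base φ h) = 1 :=
  lift_base _ _ _ _

theorem toDInf_of_notMem {i : Bool} {k : K i} (hk : k ∉ (φ i).range) :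
    toDInf hidx (of i k) = DInf.gen i := by
  simp [toDInf, ZMod2.quotientOfIndexTwo_of_notMem (hidx i) hk, DInf.gen]

theorem toDInf_surjective : Surjective (toDInf hidx) := by
  have hgen (i : Bool) : DInf.gen i ∈ (toDInf hidx).range := by
    obtain ⟨k, hk, -⟩ := Subgroup.index_eq_two_iff_exists_notMem_and.1 (hidx i)
    exact ⟨of i k, toDInf_of_notMem hidx hk⟩
  rw [← MonoidHom.range_eq_top, eq_top_iff, ← DInf.range_incl_sup_range_incl, sup_le_iff]
  refine ⟨?_, ?_⟩ <;> intro x hx <;> rcases DInf.mem_range_incl.1 hx with rfl | rfl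
  exacts [one_mem _, hgen _, one_mem _, hgen _]

theorem finite_ker_toDInf [Finite H] (hφ : ∀ i, Injective (φ i)) :
    Finite (toDInf hidx).ker :=
  have : Finite (base φ).range := Finite.of_surjective _ (base φ).rangeRestrict_surjective
  Finite.of_injective _ <| Subgroup.inclusion_injective <|
    ker_le_range_base hφ (toDInf_base hidx) fun _ _ => toDInf_of_notMem hidx

end Monoid.PushoutI

namespace DInf

variable {G : Type*} [Group G] (f : G →* DInf)

def factorPreimage (i : Bool) : Subgroup G := (incl i).range.comap f

theorem ker_le_factorPreimage (i : Bool) : f.ker ≤ factorPreimage f i :=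
  fun _ hx => (Subgroup.mem_comap.2 (f.mem_ker.1 hx ▸ one_mem _))

abbrev kerInclusion (i : Bool) : f.ker →* factorPreimage f i :=
  Subgroup.inclusion (ker_le_factorPreimage f i)

variable {f}

theorem index_range_kerInclusion (hf : Surjective f) (i : Bool) :
    (kerInclusion f i).range.index = 2 := by
  rw [Subgroup.inclusion_range, ← Subgroup.relIndex, Subgroup.relIndex_ker, factorPreimage,
    Subgroup.map_comap_eq_self_of_surjective hf, nat_card_range_incl]

theorem finite_factorPreimage [Finite f.ker] (hf : Surjective f) (i : Bool) :
    Finite (factorPreimage f i) := by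
  rw [Subgroup.finite_iff_finite_and_finiteIndex (kerInclusion f i).range]
  refine ⟨Finite.of_surjective _ (kerInclusion f i).rangeRestrict_surjective, ⟨?_⟩⟩
  rw [index_range_kerInclusion hf]
  exact two_ne_zero

variable (f) in
def liftFactorPreimage : PushoutI (kerInclusion f) →* G :=
  PushoutI.lift (fun i => (factorPreimage f i).subtype) f.ker.subtype fun _ => rfl

@[simp]
theorem liftFactorPreimage_of (i : Bool) (k : factorPreimage f i) :
    liftFactorPreimage f (PushoutI.of i k) = k :=
  PushoutI.lift_of _ _ _ _

@[simp]
theorem liftFactorPreimage_base (h : f.ker) :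
    liftFactorPreimage f (PushoutI.base _ h) = h :=
  PushoutI.lift_base _ _ _ _

theorem eq_gen_of_notMem_range_kerInclusion {i : Bool} {k : factorPreimage f i}
    (hk : k ∉ (kerInclusion f i).range) : f k = gen i :=
  (mem_range_incl.1 k.2).resolve_left fun h => hk ⟨⟨k, h⟩, rfl⟩

theorem liftFactorPreimage_injective : Injective (liftFactorPreimage f) := by
  refine (injective_iff_map_eq_one _).2 fun x hx => ?_
  have hker : x ∈ (f.comp (liftFactorPreimage f)).ker := by
    rw [MonoidHom.mem_ker, MonoidHom.comp_apply, hx, map_one]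
  obtain ⟨h, rfl⟩ := PushoutI.ker_le_range_base (fun i => Subgroup.inclusion_injective _)
    (fun h => by simpa using f.mem_ker.1 h.2)
    (fun i k hk => by simpa using eq_gen_of_notMem_range_kerInclusion hk) hker
  obtain rfl : h = 1 := Subtype.ext (by simpa using hx)
  exact map_one _

theorem liftFactorPreimage_surjective (hf : Surjective f) : Surjective (liftFactorPreimage f) := by
  have hle (i : Bool) : factorPreimage f i ≤ (liftFactorPreimage f).range := fun x hx =>
    ⟨PushoutI.of i ⟨x, hx⟩, liftFactorPreimage_of i _⟩
  rw [← MonoidHom.range_eq_top, eq_top_iff, ← Subgroup.comap_top f, ← range_incl_sup_range_incl,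
    ← Subgroup.comap_sup_eq f _ _ hf]
  exact sup_le (hle false) (hle true)

variable (f) in
noncomputable def liftFactorPreimageEquiv (hf : Surjective f) : PushoutI (kerInclusion f) ≃* G :=
  .ofBijective _ ⟨liftFactorPreimage_injective, liftFactorPreimage_surjective hf⟩

end DInf

/-- A group `G` fits into an exact sequence `1 → H → G → D_∞ → 1` with `H` finite
(i.e. is virtually cyclic of type VC2) if and only if `G` is isomorphic to an
amalgamated free product `K₁ *_H K₂` where `K₁, K₂` are finite groups each containing
`H` as a subgroup of index `2`. -/
theorem stmt_7 (G : Type) [Group G] :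
    (∃ f : G →* DInf, Function.Surjective f ∧ Finite f.ker) ↔
    (∃ (H : Type) (_ : Group H) (K : Bool → Type) (_ : ∀ i, Group (K i))
        (φ : ∀ i, H →* K i),
      (∀ i, Finite (K i)) ∧
      (∀ i, Function.Injective (φ i)) ∧
      (∀ i, ((φ i).range.index = 2)) ∧
      Nonempty (G ≃* Monoid.PushoutI φ)) := by
  constructor
  · rintro ⟨f, hf, hker⟩
    exact ⟨f.ker, inferInstance, fun i => DInf.factorPreimage f i, inferInstance,
      DInf.kerInclusion f,      DInf.finite_factorPreimage hf, fun _ => Subgroup.inclusion_injective _,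
      DInf.index_range_kerInclusion hf, ⟨(DInf.liftFactorPreimageEquiv f hf).symm⟩⟩
  · rintro ⟨H, _, K, _, φ, hK, hφ, hidx, ⟨e⟩⟩
    have : Finite H := Finite.of_injective _ (hφ false)
    have := PushoutI.finite_ker_toDInf hidx hφ
    refine ⟨(PushoutI.toDInf hidx).comp (e : G →* PushoutI φ),
      (PushoutI.toDInf_surjective hidx).comp e.surjective, ?_⟩
    rw [MonoidHom.ker_comp_mulEquiv]
    exact Finite.of_equiv _ (Subgroup.equivMapOfInjective _ _ e.symm.injective).toEquiv
end
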